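/- arXiv:2108.03019 — 2 statements merged into one kernel-verified Lean document; each statement's English description precedes it below -/
import Mathlib

section
/- For the cyclic biquandle C_m of order m, the n-th integral set-theoretic Yang–Baxter homology group H_n^{YB}(C_m) = ker ∂_n / im ∂_{n+1} has rank m^{n−1} as an abelian group. -/
/-- The `i`-th left face map of the set-theoretic Yang–Baxter (co)chain complex of the
cyclic biquandle `C_m = ℤ/mℤ` (with `R(a,b) = (b+1, a-1)`): it drops the `i`-th coordinate,
subtracting `1` from all earlier coordinates. -/
def dl (m n : ℕ) (i : Fin (n + 1)) (x : Fin (n + 1) → ZMod m) : Fin n → ZMod m :=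
  fun j => if (j : ℕ) < (i : ℕ) then x j.castSucc - 1 else x j.succ

/-- The `i`-th right face map: it drops the `i`-th coordinate, adding `1` to all later
coordinates. -/
def dr (m n : ℕ) (i : Fin (n + 1)) (x : Fin (n + 1) → ZMod m) : Fin n → ZMod m :=
  fun j => if (j : ℕ) < (i : ℕ) then x j.castSucc else x j.succ + 1

/-- The Yang–Baxter coboundary `δⁿ` of the cyclic biquandle `C_m` with coefficients in an
abelian group `A`:
`(δⁿ f)(x₁,…,x_{n+1}) = Σᵢ (−1)^{i−1} [f(x₁−1,…,x_{i−1}−1,x_{i+1},…) − f(x₁,…,x_{i−1},x_{i+1}+1,…)]`. -/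
def delta {A : Type*} [AddCommGroup A] (m n : ℕ) (f : (Fin n → ZMod m) → A) :
    (Fin (n + 1) → ZMod m) → A :=
  fun x => ∑ i : Fin (n + 1), (-1 : ℤ) ^ (i : ℕ) • (f (dl m n i x) - f (dr m n i x))

/-- The diagonal shift operator `S` on cochains: `(Sf)(x₁,…,x_k) = f(x₁−1,…,x_k−1)`. -/
def shiftC {A : Type*} (m k : ℕ) (f : (Fin k → ZMod m) → A) : (Fin k → ZMod m) → A :=
  fun x => f fun j => x j - 1

/-- The set-theoretic Yang–Baxter boundary `∂ : C_{n+1} → C_n` of the cyclic biquandle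
`C_m`, where `C_k` is the free `ℤ`-module on `(ℤ/m)^k`; on a generator `x`,
`∂x = Σᵢ (−1)^{i−1} [(x₁−1,…,x_{i−1}−1,x_{i+1},…) − (x₁,…,x_{i−1},x_{i+1}+1,…)]`. -/
noncomputable def bnd (m n : ℕ) :
    ((Fin (n + 1) → ZMod m) →₀ ℤ) →ₗ[ℤ] ((Fin n → ZMod m) →₀ ℤ) :=
  Finsupp.linearCombination ℤ fun x =>
    ∑ i : Fin (n + 1), (-1 : ℤ) ^ (i : ℕ) •
      (Finsupp.single (dl m n i x) 1 - Finsupp.single (dr m n i x) 1)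

/-!
Write `S_c` for the diagonal shift by `c ∈ ℤ/m`, `N = ∑_c S_c` for the orbit sum and
`D = ∑ᵢ (-1)^i dlᵢ` for the alternating sum of the left faces. Then `∂ = D ∘ (1 - S_1)`, `D`
commutes with every `S_c`, and prepending every `c ∈ ℤ/m` to a tuple is a homotopy `H` with
`D H + H D = m`. From this, `m³ z ≡ m² N z` modulo boundaries for every cycle `z`, while `N`
kills all boundaries and acts as `m` on its own image. So `f ↦ [N (0, f)]` embeds the free module
on `(ℤ/m)^n` into `H_{n+1}` with cokernel killed by `m³`, and the ranks agree.
-/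

theorem finrank_eq_of_injective_of_smul_mem_range {R M Q : Type*} [CommRing R] [IsDomain R]
    [AddCommGroup M] [Module R M] [AddCommGroup Q] [Module R Q] (ψ : M →ₗ[R] Q)
    (hψ : Function.Injective ψ) {a : R} (ha : a ≠ 0) (h : ∀ q, a • q ∈ LinearMap.range ψ) :
    Module.finrank R Q = Module.finrank R M := by
  have htors : Module.IsTorsion R (Q ⧸ LinearMap.range ψ) := by
    intro q
    obtain ⟨q, rfl⟩ := Submodule.Quotient.mk_surjective _ q
    refine ⟨⟨a, mem_nonZeroDivisors_of_ne_zero ha⟩, ?_⟩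
    rw [Submonoid.mk_smul, ← Submodule.Quotient.mk_smul, Submodule.Quotient.mk_eq_zero]
    exact h q
  have hrank := rank_quotient_add_rank_of_isDomain (LinearMap.range ψ)
  rw [htors.rank_eq_zero, zero_add] at hrank
  rw [(LinearEquiv.ofInjective ψ hψ).finrank_eq, Module.finrank, Module.finrank, hrank]

namespace CyclicBiquandle

abbrev Chains (m k : ℕ) := (Fin k → ZMod m) →₀ ℤ

variable {m : ℕ}

section FaceMaps

variable {k : ℕ}

theorem dl_add_const (i : Fin (k + 1)) (x : Fin (k + 1) → ZMod m) (c : ZMod m) :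
    dl m k i (fun t => x t + c) = fun j => dl m k i x j + c := by
  funext j
  simp only [dl]
  split <;> ring

theorem dr_eq_dl_add_one (i : Fin (k + 1)) (x : Fin (k + 1) → ZMod m) :
    dr m k i x = dl m k i (fun t => x t + 1) := by
  funext j
  simp only [dl, dr]
  split <;> ring

@[simp] theorem dl_cons_zero (c : ZMod m) (x : Fin (k + 1) → ZMod m) :
    dl m (k + 1) 0 (Fin.cons c x) = x := by
  funext j
  simp [dl]

@[simp] theorem dl_cons_succ (i : Fin (k + 1)) (c : ZMod m) (x : Fin (k + 1) → ZMod m) :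
    dl m (k + 1) i.succ (Fin.cons c x) = Fin.cons (c - 1) (dl m k i x) := by
  funext j
  induction j using Fin.cases with
  | zero => simp [dl]
  | succ j =>
    simp only [dl, Fin.cons_succ, Fin.val_succ, add_lt_add_iff_right]
    split_ifs <;> rfl

end FaceMaps

noncomputable def shift (m : ℕ) (c : ZMod m) (k : ℕ) : Chains m k →ₗ[ℤ] Chains m k :=
  Finsupp.lmapDomain ℤ ℤ fun x j => x j + c

noncomputable def leftBnd (m k : ℕ) : Chains m (k + 1) →ₗ[ℤ] Chains m k :=
  Finsupp.linearCombination ℤ fun x =>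
    ∑ i : Fin (k + 1), (-1 : ℤ) ^ (i : ℕ) • Finsupp.single (dl m k i x) 1

noncomputable def prependSum (m : ℕ) [NeZero m] (k : ℕ) : Chains m k →ₗ[ℤ] Chains m (k + 1) :=
  Finsupp.linearCombination ℤ fun x => ∑ c : ZMod m, Finsupp.single (Fin.cons c x) 1

noncomputable def orbitSum (m : ℕ) [NeZero m] (k : ℕ) : Chains m k →ₗ[ℤ] Chains m k :=
  ∑ c : ZMod m, shift m c k

section Operators

variable {k : ℕ}

@[simp] theorem shift_single (c : ZMod m) (x : Fin k → ZMod m) (a : ℤ) :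
    shift m c k (Finsupp.single x a) = Finsupp.single (fun j => x j + c) a := by
  simp [shift]

@[simp] theorem leftBnd_single (x : Fin (k + 1) → ZMod m) :
    leftBnd m k (Finsupp.single x 1) =
      ∑ i : Fin (k + 1), (-1 : ℤ) ^ (i : ℕ) • Finsupp.single (dl m k i x) 1 := by
  simp [leftBnd]

@[simp] theorem prependSum_single [NeZero m] (x : Fin k → ZMod m) :
    prependSum m k (Finsupp.single x 1) = ∑ c : ZMod m, Finsupp.single (Fin.cons c x) 1 := by
  simp [prependSum]

@[simp] theorem orbitSum_single [NeZero m] (x : Fin k → ZMod m) (a : ℤ) :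
    orbitSum m k (Finsupp.single x a) = ∑ c : ZMod m, Finsupp.single (fun j => x j + c) a := by
  simp [orbitSum, LinearMap.sum_apply]

theorem shift_comp_shift (a b : ZMod m) : shift m a k ∘ₗ shift m b k = shift m (b + a) k := by
  ext x : 2
  simp [add_assoc]

theorem shift_zero : shift m 0 k = LinearMap.id := by
  ext x : 2
  simp

theorem bnd_eq_leftBnd_comp : bnd m k = leftBnd m k ∘ₗ (LinearMap.id - shift m 1 (k + 1)) := by
  ext x : 2
  simp only [bnd, LinearMap.comp_apply, Finsupp.lsingle_apply, Finsupp.linearCombination_single,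
    one_smul, LinearMap.sub_apply, LinearMap.id_apply, shift_single, map_sub, leftBnd_single,
    ← Finset.sum_sub_distrib, smul_sub, dr_eq_dl_add_one]

theorem leftBnd_comp_shift (c : ZMod m) :
    leftBnd m k ∘ₗ shift m c (k + 1) = shift m c k ∘ₗ leftBnd m k := by
  ext x : 2
  simp [dl_add_const]

theorem shift_comp_prependSum [NeZero m] (c : ZMod m) :
    shift m c (k + 1) ∘ₗ prependSum m k = prependSum m k ∘ₗ shift m c k := by
  ext x : 2
  simp only [LinearMap.comp_apply, Finsupp.lsingle_apply, prependSum_single, map_sum,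
    shift_single]
  refine Fintype.sum_equiv (Equiv.addRight c) _ _ fun c' => ?_
  congr 1
  funext j
  induction j using Fin.cases <;> simp

theorem orbitSum_comp_shift [NeZero m] (c : ZMod m) :
    orbitSum m k ∘ₗ shift m c k = orbitSum m k := by
  ext x : 2
  simp only [LinearMap.comp_apply, Finsupp.lsingle_apply, shift_single, orbitSum_single]
  exact Fintype.sum_equiv (Equiv.addLeft c) _ _ fun c' => by simp [add_assoc]

theorem shift_comp_orbitSum [NeZero m] (c : ZMod m) :
    shift m c k ∘ₗ orbitSum m k = orbitSum m k := by
  ext x : 2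
  simp only [LinearMap.comp_apply, Finsupp.lsingle_apply, orbitSum_single, map_sum, shift_single]
  exact Fintype.sum_equiv (Equiv.addRight c) _ _ fun c' => by simp [add_assoc]

theorem orbitSum_comp_orbitSum [NeZero m] :
    orbitSum m k ∘ₗ orbitSum m k = (m : ℤ) • orbitSum m k := by
  rw [← Module.End.mul_eq_comp]
  nth_rw 1 [orbitSum]
  simp only [Finset.sum_mul, Module.End.mul_eq_comp, shift_comp_orbitSum, Finset.sum_const,
    Finset.card_univ, ZMod.card, ← Nat.cast_smul_eq_nsmul ℤ]

theorem leftBnd_comp_orbitSum [NeZero m] :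
    leftBnd m k ∘ₗ orbitSum m (k + 1) = orbitSum m k ∘ₗ leftBnd m k := by
  refine LinearMap.ext fun v => ?_
  simp only [orbitSum, LinearMap.comp_apply, LinearMap.sum_apply, map_sum]
  exact Finset.sum_congr rfl fun c _ => LinearMap.congr_fun (leftBnd_comp_shift c) v

theorem prependSum_comp_orbitSum [NeZero m] :
    prependSum m k ∘ₗ orbitSum m k = orbitSum m (k + 1) ∘ₗ prependSum m k := by
  refine LinearMap.ext fun v => ?_
  simp only [orbitSum, LinearMap.comp_apply, LinearMap.sum_apply, map_sum]
  exact Finset.sum_congr rfl fun c _ => (LinearMap.congr_fun (shift_comp_prependSum c) v).symm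

theorem leftBnd_comp_prependSum_add [NeZero m] :
    leftBnd m (k + 1) ∘ₗ prependSum m (k + 1) + prependSum m k ∘ₗ leftBnd m k =
      (m : ℤ) • LinearMap.id := by
  ext x : 2
  have hface : ∀ c : ZMod m, leftBnd m (k + 1) (Finsupp.single (Fin.cons c x) 1) =
      Finsupp.single x 1 - ∑ i : Fin (k + 1),
        (-1 : ℤ) ^ (i : ℕ) • Finsupp.single (Fin.cons (c - 1) (dl m k i x)) 1 := by
    intro c
    simp [Fin.sum_univ_succ, pow_succ, sub_eq_add_neg]
  have hreindex : ∀ i : Fin (k + 1), ∑ c : ZMod m,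
      Finsupp.single (Fin.cons (c - 1) (dl m k i x) : Fin (k + 1) → ZMod m) (1 : ℤ) =
        prependSum m k (Finsupp.single (dl m k i x) 1) := fun i => by
    rw [prependSum_single]
    exact Fintype.sum_equiv (Equiv.subRight 1) _ _ fun _ => rfl
  simp only [LinearMap.add_apply, LinearMap.comp_apply, Finsupp.lsingle_apply, prependSum_single,
    map_sum, hface, Finset.sum_sub_distrib, Finset.sum_const, Finset.card_univ, ZMod.card,
    ← Nat.cast_smul_eq_nsmul ℤ]
  rw [Finset.sum_comm]
  simp only [← Finset.smul_sum, hreindex, leftBnd_single, map_sum, map_zsmul, LinearMap.smul_apply,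
    LinearMap.id_apply, sub_add_cancel]

theorem shift_natCast_succ (n : ℕ) (v : Chains m k) :
    shift m ((n + 1 : ℕ) : ZMod m) k v = shift m 1 k (shift m n k v) := by
  rw [← LinearMap.comp_apply, shift_comp_shift, Nat.cast_succ]

theorem sub_shift_mem_range [NeZero m] (c : ZMod m) (v : Chains m k) :
    v - shift m c k v ∈ LinearMap.range (LinearMap.id - shift m 1 k) := by
  obtain ⟨n, rfl⟩ := ZMod.natCast_zmod_surjective c
  induction n with
  | zero => simp [shift_zero]
  | succ n ih =>
    rw [shift_natCast_succ, ← sub_add_sub_cancel v (shift m n k v)]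
    exact add_mem ih ⟨shift m n k v, rfl⟩

theorem smul_sub_orbitSum_mem_range [NeZero m] (v : Chains m k) :
    (m : ℤ) • v - orbitSum m k v ∈ LinearMap.range (LinearMap.id - shift m 1 k) := by
  have hsum : (m : ℤ) • v - orbitSum m k v = ∑ c : ZMod m, (v - shift m c k v) := by
    rw [Finset.sum_sub_distrib, Finset.sum_const, Finset.card_univ, ZMod.card,
      ← Nat.cast_smul_eq_nsmul ℤ, orbitSum, LinearMap.sum_apply]
  rw [hsum]
  exact Submodule.sum_mem _ fun c _ => sub_shift_mem_range c v

theorem shift_apply_eq_self [NeZero m] {w : Chains m k} (hw : shift m 1 k w = w) (c : ZMod m) :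
    shift m c k w = w := by
  obtain ⟨n, rfl⟩ := ZMod.natCast_zmod_surjective c
  induction n with
  | zero => simp [shift_zero]
  | succ n ih => rw [shift_natCast_succ, ih, hw]

theorem orbitSum_apply_eq_smul [NeZero m] {w : Chains m k} (hw : shift m 1 k w = w) :
    orbitSum m k w = (m : ℤ) • w := by
  rw [orbitSum, LinearMap.sum_apply, Finset.sum_congr rfl fun c _ => shift_apply_eq_self hw c,
    Finset.sum_const, Finset.card_univ, ZMod.card, Nat.cast_smul_eq_nsmul]

theorem eq_zero_of_natCast_smul_eq_zero [NeZero m] {v : Chains m k} (h : (m : ℤ) • v = 0) :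
    v = 0 :=
  (smul_eq_zero.mp h).resolve_left (Nat.cast_ne_zero.mpr (NeZero.ne m))

end Operators

section OrbitRepresentatives

variable {n : ℕ}

def normalize (m n : ℕ) (x : Fin (n + 1) → ZMod m) : Fin n → ZMod m :=
  fun j => x j.succ - x 0

noncomputable def orbitSumCons (m : ℕ) [NeZero m] (n : ℕ) : Chains m n →ₗ[ℤ] Chains m (n + 1) :=
  orbitSum m (n + 1) ∘ₗ Finsupp.lmapDomain ℤ ℤ fun y => Fin.cons (0 : ZMod m) y

theorem orbitSum_eq_orbitSumCons_comp [NeZero m] :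
    orbitSum m (n + 1) = orbitSumCons m n ∘ₗ Finsupp.lmapDomain ℤ ℤ (normalize m n) := by
  ext x : 2
  simp only [orbitSumCons, LinearMap.comp_apply, Finsupp.lsingle_apply, Finsupp.lmapDomain_apply,
    Finsupp.mapDomain_single, orbitSum_single]
  refine Fintype.sum_equiv (Equiv.addRight (x 0)) _ _ fun c => ?_
  congr 1
  funext j
  induction j using Fin.cases <;> simp [normalize, add_comm]

@[simp] theorem normalize_cons_zero_add (y : Fin n → ZMod m) (c : ZMod m) :
    normalize m n (fun j => (Fin.cons 0 y : Fin (n + 1) → ZMod m) j + c) = y := by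
  funext j
  simp [normalize]

theorem lmapDomain_normalize_comp_orbitSumCons [NeZero m] :
    Finsupp.lmapDomain ℤ ℤ (normalize m n) ∘ₗ orbitSumCons m n = (m : ℤ) • LinearMap.id := by
  ext y : 2
  simp [orbitSumCons, Finsupp.mapDomain_single, ZMod.card]

theorem orbitSumCons_injective [NeZero m] : Function.Injective (orbitSumCons m n) := by
  rw [← LinearMap.ker_eq_bot, Submodule.eq_bot_iff]
  intro f hf
  have hmf := LinearMap.congr_fun (lmapDomain_normalize_comp_orbitSumCons (m := m)) f
  rw [LinearMap.comp_apply, hf, map_zero, LinearMap.smul_apply, LinearMap.id_apply] at hmf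
  exact eq_zero_of_natCast_smul_eq_zero hmf.symm

end OrbitRepresentatives

section Homology

variable [NeZero m] {k : ℕ}

theorem bnd_comp_orbitSum : bnd m k ∘ₗ orbitSum m (k + 1) = 0 := by
  rw [bnd_eq_leftBnd_comp, LinearMap.comp_assoc, LinearMap.sub_comp, LinearMap.id_comp,
    shift_comp_orbitSum, sub_self, LinearMap.comp_zero]

theorem orbitSum_comp_bnd : orbitSum m k ∘ₗ bnd m k = 0 := by
  rw [bnd_eq_leftBnd_comp, ← LinearMap.comp_assoc, ← leftBnd_comp_orbitSum, LinearMap.comp_assoc,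
    LinearMap.comp_sub, LinearMap.comp_id, orbitSum_comp_shift, sub_self, LinearMap.comp_zero]

theorem leftBnd_eq_zero_of_bnd_eq_zero {b : Chains m (k + 1)} (hb : bnd m k b = 0)
    (hNb : orbitSum m (k + 1) b = 0) : leftBnd m k b = 0 := by
  have hfixed : shift m 1 k (leftBnd m k b) = leftBnd m k b := by
    rw [bnd_eq_leftBnd_comp, LinearMap.comp_apply, LinearMap.sub_apply, LinearMap.id_apply,
      map_sub, ← LinearMap.comp_apply (leftBnd m k), leftBnd_comp_shift, sub_eq_zero] at hb
    exact hb.symm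
  apply eq_zero_of_natCast_smul_eq_zero
  rw [← orbitSum_apply_eq_smul hfixed, ← LinearMap.comp_apply, ← leftBnd_comp_orbitSum,
    LinearMap.comp_apply, hNb, map_zero]

theorem sq_smul_mem_range_bnd {b : Chains m (k + 1)} (hDb : leftBnd m k b = 0)
    (hNb : orbitSum m (k + 1) b = 0) : (m : ℤ) ^ 2 • b ∈ LinearMap.range (bnd m (k + 1)) := by
  set h := prependSum m (k + 1) b
  have hmb : (m : ℤ) • b = leftBnd m (k + 1) h := by
    have := LinearMap.congr_fun (leftBnd_comp_prependSum_add (m := m) (k := k)) b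
    simpa [hDb] using this.symm
  have hNh : orbitSum m (k + 2) h = 0 := by
    rw [← LinearMap.comp_apply, ← prependSum_comp_orbitSum, LinearMap.comp_apply, hNb, map_zero]
  obtain ⟨u, hu⟩ := smul_sub_orbitSum_mem_range h
  refine ⟨u, ?_⟩
  rw [bnd_eq_leftBnd_comp, LinearMap.comp_apply, hu, hNh, sub_zero, map_smul, ← hmb, smul_smul,
    sq]

theorem cube_smul_sub_mem_range_bnd {z : Chains m (k + 1)} (hz : bnd m k z = 0) :
    (m : ℤ) ^ 3 • z - (m : ℤ) ^ 2 • orbitSum m (k + 1) z ∈ LinearMap.range (bnd m (k + 1)) := by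
  set b := (m : ℤ) • z - orbitSum m (k + 1) z
  have hNN := LinearMap.congr_fun (orbitSum_comp_orbitSum (m := m) (k := k + 1)) z
  have hbN := LinearMap.congr_fun (bnd_comp_orbitSum (m := m) (k := k)) z
  simp only [LinearMap.comp_apply, LinearMap.smul_apply, LinearMap.zero_apply] at hNN hbN
  have hb : bnd m k b = 0 := by simp [b, hz, hbN]
  have hNb : orbitSum m (k + 1) b = 0 := by simp [b, hNN]
  have hmem := sq_smul_mem_range_bnd (leftBnd_eq_zero_of_bnd_eq_zero hb hNb) hNb
  rwa [smul_sub, smul_smul, ← pow_succ] at hmem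

theorem eq_zero_of_orbitSumCons_mem_range_bnd {f : Chains m k}
    (hf : orbitSumCons m k f ∈ LinearMap.range (bnd m (k + 1))) : f = 0 := by
  obtain ⟨u, hu⟩ := hf
  have hN : orbitSum m (k + 1) (orbitSumCons m k f) = (m : ℤ) • orbitSumCons m k f := by
    simp only [orbitSumCons, ← LinearMap.comp_apply, ← LinearMap.comp_assoc,
      orbitSum_comp_orbitSum, LinearMap.smul_comp, LinearMap.smul_apply]
  have hzero : orbitSumCons m k f = 0 := by
    apply eq_zero_of_natCast_smul_eq_zero
    rw [← hN, ← hu, ← LinearMap.comp_apply, orbitSum_comp_bnd, LinearMap.zero_apply]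
  exact orbitSumCons_injective (hzero.trans (map_zero _).symm)

end Homology

end CyclicBiquandle

open CyclicBiquandle

/-- the `n`-th integral set-theoretic Yang–Baxter homology group
`H_n = ker ∂_n / im ∂_{n+1}` of the cyclic biquandle `C_m` has rank `m^{n−1}` as an abelian
group. (The degree `n ≥ 1` is realized as `n+1` with `n : ℕ` arbitrary, so the claim reads
`rank H_{n+1} = m^n`.) -/
theorem rank_YB_homology_cyclic_biquandle (m n : ℕ) (hm : 1 ≤ m) :
    Module.finrank ℤ
      (↥(LinearMap.ker (bnd m n)) ⧸
        Submodule.comap (LinearMap.ker (bnd m n)).subtype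
          (LinearMap.range (bnd m (n + 1)))) = m ^ n := by
  have : NeZero m := ⟨by omega⟩
  set K := LinearMap.ker (bnd m n)
  set B := Submodule.comap K.subtype (LinearMap.range (bnd m (n + 1)))
  have hcycle (f : Chains m n) : orbitSumCons m n f ∈ K := by
    rw [LinearMap.mem_ker, orbitSumCons, ← LinearMap.comp_apply, ← LinearMap.comp_assoc,
      bnd_comp_orbitSum, LinearMap.zero_comp, LinearMap.zero_apply]
  let ψ : Chains m n →ₗ[ℤ] K ⧸ B := B.mkQ ∘ₗ (orbitSumCons m n).codRestrict K hcycle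
  have hψ : Function.Injective ψ := by
    rw [← LinearMap.ker_eq_bot, Submodule.eq_bot_iff]
    exact fun f hf =>
      eq_zero_of_orbitSumCons_mem_range_bnd ((Submodule.Quotient.mk_eq_zero B).mp hf)
  have hψ_range (q : K ⧸ B) : (m : ℤ) ^ 3 • q ∈ LinearMap.range ψ := by
    obtain ⟨z, rfl⟩ := Submodule.Quotient.mk_surjective B q
    refine ⟨(m : ℤ) ^ 2 • Finsupp.lmapDomain ℤ ℤ (normalize m n) z, ?_⟩
    rw [LinearMap.comp_apply, Submodule.mkQ_apply, ← Submodule.Quotient.mk_smul,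
      Submodule.Quotient.eq, Submodule.mem_comap]
    have hN := LinearMap.congr_fun (orbitSum_eq_orbitSumCons_comp (m := m) (n := n)) z
    rw [LinearMap.comp_apply, Finsupp.lmapDomain_apply] at hN
    simpa [ψ, ← hN, smul_sub] using neg_mem (cube_smul_sub_mem_range_bnd z.2)
  have hm3 : (m : ℤ) ^ 3 ≠ 0 := pow_ne_zero 3 (by exact_mod_cast NeZero.ne m)
  rw [finrank_eq_of_injective_of_smul_mem_range ψ hψ hm3 hψ_range, Module.finrank_finsupp_self,
    Fintype.card_fun, ZMod.card, Fintype.card_fin]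
end

section
/- Let f : (ℤ/mℤ)^n → ℤ be an n-cocycle of the integral Yang–Baxter cochain complex of the cyclic biquandle C_m (δ^n f = 0). Then m·(Sf − f) is a coboundary: there exists g : (ℤ/mℤ)^{n−1} → ℤ with δ^{n−1} g = m·(Sf − f), where (Sf)(x_1,…,x_n) = f(x_1−1,…,x_n−1). -/
lemma dl_succ_cons (m n : ℕ) (i : Fin (n+1)) (a : ZMod m) (z : Fin (n+1) → ZMod m) :
    dl m (n+1) i.succ (Fin.cons a z) = Fin.cons (a-1) (dl m n i z) := by
  funext j
  refine Fin.cases ?_ (fun j' => ?_) j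
  · simp [dl]
  · simp only [dl, Fin.cons_succ, Fin.val_succ]
    rw [← Fin.succ_castSucc]
    simp [Nat.succ_lt_succ_iff]

lemma dr_succ_cons (m n : ℕ) (i : Fin (n+1)) (a : ZMod m) (z : Fin (n+1) → ZMod m) :
    dr m (n+1) i.succ (Fin.cons a z) = Fin.cons a (dr m n i z) := by
  funext j
  refine Fin.cases ?_ (fun j' => ?_) j
  · simp [dr]
  · simp only [dr, Fin.cons_succ, Fin.val_succ]
    rw [← Fin.succ_castSucc]
    simp [Nat.succ_lt_succ_iff]

/-- STATEMENT 10: for an integral `n`-cocycle `f` of the Yang–Baxter cochain complex of the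
cyclic biquandle `C_m`, the cochain `m·(Sf − f)` is a coboundary, where `S` is the diagonal
shift. (The `n`-cochains, `n ≥ 1`, are realized as degree `n+1`-cochains with `n : ℕ`
arbitrary.) -/
theorem m_smul_shift_sub_self_is_coboundary (m n : ℕ) (hm : 1 ≤ m)
    (f : (Fin (n + 1) → ZMod m) → ℤ) (hf : delta m (n + 1) f = 0) :
    ∃ g : (Fin n → ZMod m) → ℤ,
      delta m n g = fun x => (m : ℤ) * (shiftC m (n + 1) f x - f x) := by
  haveI : NeZero m := ⟨by omega⟩
  refine ⟨fun w => ∑ a : ZMod m, f (Fin.cons a (fun j => w j - 1)), ?_⟩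
  funext x
  set z : Fin (n+1) → ZMod m := fun j => x j - 1 with hz
  -- commuting the diagonal shift with face maps
  have hdl : ∀ i : Fin (n+1), (fun j => dl m n i x j - 1) = dl m n i z := by
    intro i; funext j; simp only [dl, hz]; split <;> ring
  have hdr : ∀ i : Fin (n+1), (fun j => dr m n i x j - 1) = dr m n i z := by
    intro i; funext j; simp only [dr, hz]; split <;> ring
  -- the cocycle condition at `Fin.cons a z`, with the 0-th face split off
  have hcoc : ∀ a : ZMod m,
      ∑ i : Fin (n+1), (-1 : ℤ) ^ (i : ℕ) •
        (f (dl m (n+1) i.succ (Fin.cons a z)) - f (dr m (n+1) i.succ (Fin.cons a z)))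
      = f z - f x := by
    intro a
    have h0 := congrFun hf (Fin.cons a z)
    rw [delta] at h0
    rw [Fin.sum_univ_succ] at h0
    have hdl0 : dl m (n+1) 0 (Fin.cons a z) = z := by
      funext j; simp [dl]
    have hdr0 : dr m (n+1) 0 (Fin.cons a z) = x := by
      funext j; simp [dr, hz]
    rw [hdl0, hdr0] at h0
    simp only [Fin.val_zero, pow_zero, one_smul, Fin.val_succ, pow_succ, Pi.zero_apply] at h0
    have : ∑ i : Fin (n+1), ((-1:ℤ) ^ (i:ℕ) * -1) •
        (f (dl m (n+1) i.succ (Fin.cons a z)) - f (dr m (n+1) i.succ (Fin.cons a z)))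
        = -(∑ i : Fin (n+1), (-1 : ℤ) ^ (i : ℕ) •
        (f (dl m (n+1) i.succ (Fin.cons a z)) - f (dr m (n+1) i.succ (Fin.cons a z)))) := by
      rw [← Finset.sum_neg_distrib]
      refine Finset.sum_congr rfl fun i _ => ?_
      rw [← neg_smul]; ring_nf
    rw [this] at h0
    linarith
  -- compute δg
  rw [delta]

  have hrw : ∀ i : Fin (n+1),
      (∑ a : ZMod m, f (Fin.cons a (fun j => dl m n i x j - 1)))
        - (∑ a : ZMod m, f (Fin.cons a (fun j => dr m n i x j - 1)))
      = ∑ a : ZMod m,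
          (f (dl m (n+1) i.succ (Fin.cons a z)) - f (dr m (n+1) i.succ (Fin.cons a z))) := by
    intro i
    rw [Finset.sum_sub_distrib]
    congr 1
    · rw [hdl i]
      have := Equiv.sum_comp (Equiv.subRight (1 : ZMod m))
        (fun a => f (Fin.cons a (dl m n i z)))
      rw [← this]
      refine Finset.sum_congr rfl fun a _ => ?_
      rw [dl_succ_cons]
      rfl
    · rw [hdr i]
      refine Finset.sum_congr rfl fun a _ => ?_
      rw [dr_succ_cons]
  calc ∑ i : Fin (n+1), (-1:ℤ) ^ (i:ℕ) •
          ((∑ a : ZMod m, f (Fin.cons a (fun j => dl m n i x j - 1)))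
            - ∑ a : ZMod m, f (Fin.cons a (fun j => dr m n i x j - 1)))
      = ∑ i : Fin (n+1), ∑ a : ZMod m, (-1:ℤ) ^ (i:ℕ) •
          (f (dl m (n+1) i.succ (Fin.cons a z)) - f (dr m (n+1) i.succ (Fin.cons a z))) := by
        refine Finset.sum_congr rfl fun i _ => ?_
        rw [hrw i, Finset.smul_sum]
    _ = ∑ a : ZMod m, ∑ i : Fin (n+1), (-1:ℤ) ^ (i:ℕ) •
          (f (dl m (n+1) i.succ (Fin.cons a z)) - f (dr m (n+1) i.succ (Fin.cons a z))) :=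
        Finset.sum_comm
    _ = ∑ _a : ZMod m, (f z - f x) := Finset.sum_congr rfl fun a _ => hcoc a
    _ = (m : ℤ) * (shiftC m (n+1) f x - f x) := by
        rw [Finset.sum_const, Finset.card_univ, ZMod.card]
        simp [shiftC, hz, nsmul_eq_mul]
end
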